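/- If n ≥ 3 is odd and k ≥ 3, then the metric dimension of (C_n □ P_k) □ P_2 is 3. -/

import Mathlib

open SimpleGraph
open Fin.CommRing

/-- `Q` is a resolving set of `G`: distinct vertices have distinct distance vectors to `Q`. -/
def IsResolving {V : Type*} (G : SimpleGraph V) (Q : Finset V) : Prop :=
  ∀ x y : V, (∀ q ∈ Q, G.dist x q = G.dist y q) → x = y

/-- `Q` is a doubly resolving set of `G`. -/
def IsDoublyResolving {V : Type*} (G : SimpleGraph V) (Q : Finset V) : Prop :=
  ∀ x y : V, x ≠ y → ∃ u ∈ Q, ∃ v ∈ Q,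
    (G.dist x u : ℤ) - (G.dist x v : ℤ) ≠ (G.dist y u : ℤ) - (G.dist y v : ℤ)

/-- `Q` is a strong resolving set of `G`: for distinct `p q` some `r ∈ Q` has
`p` on a shortest `q`–`r` path or `q` on a shortest `p`–`r` path. -/
def IsStrongResolving {V : Type*} (G : SimpleGraph V) (Q : Finset V) : Prop :=
  ∀ p q : V, p ≠ q → ∃ r ∈ Q,
    G.dist q r = G.dist q p + G.dist p r ∨ G.dist p r = G.dist p q + G.dist q r


section Potential
variable {V : Type*} {G : SimpleGraph V}

lemma pot_le_walk (φ : V → ℕ) (hφ : ∀ u v, G.Adj u v → φ u ≤ φ v + 1) :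
    ∀ {x y : V} (w : G.Walk x y), φ x ≤ w.length + φ y := by
  intro x y w
  induction w with
  | nil => simp
  | cons h w ih =>
    have := hφ _ _ h
    simp only [Walk.length_cons]
    omega

lemma pot_le_dist (hc : G.Connected) (φ : V → ℕ)
    (hφ : ∀ u v, G.Adj u v → φ u ≤ φ v + 1) (x y : V) :
    φ x ≤ G.dist x y + φ y := by
  obtain ⟨w, hw⟩ := hc.exists_walk_length_eq_dist x y
  simpa [hw] using pot_le_walk φ hφ w

end Potential

lemma path_walk {k : ℕ} : ∀ (d : ℕ) (u v : Fin k), u.val + d = v.val →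
    ∃ w : (pathGraph k).Walk u v, w.length = d := by
  intro d
  induction d with
  | zero =>
    intro u v h
    obtain rfl : u = v := Fin.ext (by omega)
    exact ⟨Walk.nil, rfl⟩
  | succ d ih =>
    intro u v h
    have hlt : u.val + 1 < k := by omega
    set u' : Fin k := ⟨u.val + 1, hlt⟩ with hu'
    have hadj : (pathGraph k).Adj u u' := by
      rw [pathGraph_adj]; left; rfl
    obtain ⟨w, hw⟩ := ih u' v (by simp [hu']; omega)
    exact ⟨Walk.cons hadj w, by simp [hw]⟩

lemma path_dist {k : ℕ} (hk : 0 < k) (u v : Fin k) :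
    (pathGraph k).dist u v = (u.val - v.val) + (v.val - u.val) := by
  have hc : (pathGraph k).Connected := by
    obtain ⟨k', rfl⟩ : ∃ k', k = k' + 1 := ⟨k - 1, by omega⟩
    exact pathGraph_connected k'
  have hφ : ∀ a b : Fin k, (pathGraph k).Adj a b → a.val ≤ b.val + 1 := by
    intro a b h; rw [pathGraph_adj] at h; omega
  have h1 := pot_le_dist hc (fun a => a.val) hφ u v
  have h2 := pot_le_dist hc (fun a => a.val) hφ v u
  rw [SimpleGraph.dist_comm] at h2
  apply le_antisymm _ (by omega)
  rcases le_total u.val v.val with h | h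
  · obtain ⟨w, hw⟩ := path_walk (v.val - u.val) u v (by omega)
    have := dist_le w
    omega
  · obtain ⟨w, hw⟩ := path_walk (u.val - v.val) v u (by omega)
    have := dist_le w
    rw [SimpleGraph.dist_comm]
    omega


lemma cycle_adj_succ {n : ℕ} [NeZero n] (hn : 2 ≤ n) (u : Fin n) :
    (cycleGraph n).Adj u (u + 1) := by
  haveI : NeZero n := ⟨by omega⟩
  rw [cycleGraph_adj']
  right
  have h : u + 1 - u = 1 := by ring
  rw [h, Fin.val_one']
  exact Nat.mod_eq_of_lt (by omega)

lemma cycle_walk {n : ℕ} [NeZero n] (hn : 2 ≤ n) : ∀ (t : ℕ) (u : Fin n),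
    ∃ w : (cycleGraph n).Walk u (u + (t : Fin n)), w.length = t := by
  haveI : NeZero n := ⟨by omega⟩
  intro t
  induction t with
  | zero =>
    intro u
    exact ⟨(Walk.nil : (cycleGraph n).Walk u u).copy rfl (by simp), by simp⟩
  | succ t ih =>
    intro u
    obtain ⟨w, hw⟩ := ih u
    have hadj := cycle_adj_succ hn (u + (t : Fin n))
    have hcast : ((t + 1 : ℕ) : Fin n) = (t : Fin n) + 1 := by push_cast; ring
    rw [hcast, ← add_assoc]
    exact ⟨w.concat hadj, by simp [hw]⟩

lemma cycle_walk' {n : ℕ} (hn : 2 ≤ n) (u v : Fin n) :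
    ∃ w : (cycleGraph n).Walk u v, w.length = ((v - u).val) := by
  haveI : NeZero n := ⟨by omega⟩
  obtain ⟨w, hw⟩ := cycle_walk hn ((v - u).val) u
  exact ⟨w.copy rfl (by rw [Fin.cast_val_eq_self]; ring), by simp [hw]⟩

lemma cycle_connected {n : ℕ} (hn : 2 ≤ n) : (cycleGraph n).Connected := by
  haveI : NeZero n := ⟨by omega⟩
  rw [connected_iff]
  exact ⟨fun u v => ⟨(cycle_walk' hn u v).choose⟩, ⟨0⟩⟩

lemma cycle_walk_mod {n : ℕ} : ∀ {u v : Fin n} (w : (cycleGraph n).Walk u v),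
    ∃ z : ℤ, (n : ℤ) ∣ (z - ((v.val : ℤ) - (u.val : ℤ))) ∧ z.natAbs ≤ w.length := by
  intro u v w
  induction w with
  | nil => exact ⟨0, by simp, by simp⟩
  | @cons u x v h w ih =>
    obtain ⟨z, hz, hle⟩ := ih
    rw [cycleGraph_adj'] at h
    rcases h with h | h
    · -- (u - x).val = 1 : step down
      have h' : ((u - x : Fin n) : ℤ) = 1 := by exact_mod_cast h
      have hite := Fin.coe_int_sub_eq_ite u x
      rw [h'] at hite
      have hd : (n : ℤ) ∣ ((u.val : ℤ) - x.val - 1) := by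
        split_ifs at hite with h2
        · exact ⟨0, by rw [mul_zero]; omega⟩
        · exact ⟨-1, by rw [mul_neg_one]; omega⟩
      refine ⟨z - 1, ?_, ?_⟩
      · have hdd := dvd_add hz hd
        convert hdd using 1
        · rfl
        ring
      · have := Int.natAbs_sub_le z 1
        simp only [Walk.length_cons]
        omega
    · -- (x - u).val = 1 : step up
      have h' : ((x - u : Fin n) : ℤ) = 1 := by exact_mod_cast h
      have hite := Fin.coe_int_sub_eq_ite x u
      rw [h'] at hite
      have hd : (n : ℤ) ∣ ((x.val : ℤ) - u.val - 1) := by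
        split_ifs at hite with h2
        · exact ⟨0, by rw [mul_zero]; omega⟩
        · exact ⟨-1, by rw [mul_neg_one]; omega⟩
      refine ⟨z + 1, ?_, ?_⟩
      · have hdd := dvd_sub hz hd
        convert hdd using 1
        · rfl
        ring
      · have := Int.natAbs_add_le z 1
        simp only [Walk.length_cons]
        omega

lemma cycle_dist {n : ℕ} (hn : 2 ≤ n) (u v : Fin n) :
    (cycleGraph n).dist u v = min ((v - u).val) ((u - v).val) := by
  haveI : NeZero n := ⟨by omega⟩
  apply le_antisymm
  · apply le_min
    · obtain ⟨w, hw⟩ := cycle_walk' hn u v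
      exact hw ▸ dist_le w
    · obtain ⟨w, hw⟩ := cycle_walk' hn v u
      rw [SimpleGraph.dist_comm]
      exact hw ▸ dist_le w
  · obtain ⟨w, hw⟩ := (cycle_connected hn).exists_walk_length_eq_dist u v
    obtain ⟨z, ⟨c, hc⟩, hle⟩ := cycle_walk_mod w
    rw [hw] at hle
    have hA : (((v - u).val : ℤ)) = (v.val : ℤ) - u.val ∨
        (((v - u).val : ℤ)) = (v.val : ℤ) - u.val + n := by
      have := Fin.coe_int_sub_eq_ite v u
      split_ifs at this <;> [left; right] <;> exact_mod_cast this
    have hB : (((u - v).val : ℤ)) = (u.val : ℤ) - v.val ∨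
        (((u - v).val : ℤ)) = (u.val : ℤ) - v.val + n := by
      have := Fin.coe_int_sub_eq_ite u v
      split_ifs at this <;> [left; right] <;> exact_mod_cast this
    have hzabs : (z.natAbs : ℤ) = z ∨ (z.natAbs : ℤ) = -z := by
      rcases Int.natAbs_eq z with h | h
      · left; omega
      · right; omega
    have hAlt : ((v - u).val) < n := (v - u).is_lt
    have hBlt : ((u - v).val) < n := (u - v).is_lt
    rcases le_total ((v - u).val) ((u - v).val) with hm | hm <;>
      rw [show min ((v - u).val) ((u - v).val) = _ from
        (by first | exact min_eq_left hm | exact min_eq_right hm)] <;>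
    · rcases lt_trichotomy c 0 with hc0 | hc0 | hc0
      · have hnc : (n : ℤ) * c ≤ (n : ℤ) * (-1) :=
          mul_le_mul_of_nonneg_left (by omega) (by positivity)
        rw [mul_neg_one] at hnc
        omega
      · subst hc0
        rw [mul_zero] at hc
        omega
      · have hnc : (n : ℤ) * 1 ≤ (n : ℤ) * c :=
          mul_le_mul_of_nonneg_left (by omega) (by positivity)
        rw [mul_one] at hnc
        omega




lemma adj_dist_le_one {V : Type*} {G : SimpleGraph V} {u v : V} (h : G.Adj u v) :
    G.dist u v ≤ 1 := by
  simpa using SimpleGraph.dist_le h.toWalk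

lemma boxProd_dist {α β : Type*} {G : SimpleGraph α} {H : SimpleGraph β}
    (hG : G.Connected) (hH : H.Connected) (x y : α × β) :
    (G □ H).dist x y = G.dist x.1 y.1 + H.dist x.2 y.2 := by
  apply le_antisymm
  · obtain ⟨p, hp⟩ := hG.exists_walk_length_eq_dist x.1 y.1
    obtain ⟨q, hq⟩ := hH.exists_walk_length_eq_dist x.2 y.2
    refine le_trans (dist_le (((p.boxProdLeft H x.2).append (q.boxProdRight G y.1)).copy
      (by simp) (by simp) : (G □ H).Walk x y)) ?_
    rw [Walk.length_copy, Walk.length_append]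
    simp only [Walk.length_copy, Walk.length_append, Walk.boxProdLeft, Walk.boxProdRight,
      Walk.length_map]
    erw [Walk.length_map, Walk.length_map]
    omega
  · have hφ : ∀ u v : α × β, (G □ H).Adj u v →
        (G.dist u.1 y.1 + H.dist u.2 y.2) ≤ (G.dist v.1 y.1 + H.dist v.2 y.2) + 1 := by
      rintro u v (⟨ha, he⟩ | ⟨ha, he⟩)
      · have h1 : G.dist u.1 y.1 ≤ G.dist v.1 y.1 + 1 := by
          have := hG.dist_triangle (v := v.1) (u := u.1) (w := y.1)
          have := adj_dist_le_one ha
          omega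
        rw [he]
        omega
      · have h1 : H.dist u.2 y.2 ≤ H.dist v.2 y.2 + 1 := by
          have := hH.dist_triangle (v := v.2) (u := u.2) (w := y.2)
          have := adj_dist_le_one ha
          omega
        rw [he]
        omega
    have := pot_le_dist (hG.boxProd hH) (fun v => G.dist v.1 y.1 + H.dist v.2 y.2) hφ x y
    simpa only [SimpleGraph.dist_self, add_zero] using this

lemma cycle_dist_mk {n : ℕ} (hn : 2 ≤ n) (u v : Fin n) :
    (cycleGraph n).dist u v =
      min ((u.val - v.val) + (v.val - u.val)) (n - ((u.val - v.val) + (v.val - u.val))) := by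
  rw [cycle_dist hn u v]
  have hA : (((v - u).val : ℤ)) = (v.val : ℤ) - u.val ∨
      (((v - u).val : ℤ)) = (v.val : ℤ) - u.val + n := by
    have := Fin.coe_int_sub_eq_ite v u
    split_ifs at this <;> [left; right] <;> exact_mod_cast this
  have hB : (((u - v).val : ℤ)) = (u.val : ℤ) - v.val ∨
      (((u - v).val : ℤ)) = (u.val : ℤ) - v.val + n := by
    have := Fin.coe_int_sub_eq_ite u v
    split_ifs at this <;> [left; right] <;> exact_mod_cast this
  have h1 : ((v - u).val) < n := (v - u).is_lt
  have h2 : ((u - v).val) < n := (u - v).is_lt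
  have h3 : u.val < n := u.is_lt
  have h4 : v.val < n := v.is_lt
  rcases hA with hA | hA <;> rcases hB with hB | hB <;> omega

set_option maxHeartbeats 1600000 in
theorem key (n m a b i j s t : ℕ)
  (hm : n = 2*m+1)
  (ha : a < n) (hb : b < n) (hs : s < 2) (ht : t < 2)
  (h1 : min a (n - a) + i + s = min b (n - b) + j + t)
  (h2 : min a (n - a) + i + (s - 1 + (1 - s)) = min b (n - b) + j + (t - 1 + (1 - t)))
  (h3 : (a - m + (m - a)) + i + s = (b - m + (m - b)) + j + t) :
  a = b ∧ i = j ∧ s = t := by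
  have hst : s = t := by clear h3; omega
  subst hst
  clear h2 hs
  rcases le_or_gt a m with h | h <;> rcases le_or_gt b m with h' | h' <;>
    [rw [min_eq_left (by omega : a ≤ n - a), min_eq_left (by omega : b ≤ n - b)] at h1;
     rw [min_eq_left (by omega : a ≤ n - a), min_eq_right (by omega : n - b ≤ b)] at h1;
     rw [min_eq_right (by omega : n - a ≤ a), min_eq_left (by omega : b ≤ n - b)] at h1;
     rw [min_eq_right (by omega : n - a ≤ a), min_eq_right (by omega : n - b ≤ b)] at h1] <;>
    omega

theorem stmt10 (n k : ℕ) (hn : 3 ≤ n) (ho : Odd n) (hk : 3 ≤ k) :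
    IsLeast {m : ℕ | ∃ Q, IsResolving ((cycleGraph n □ pathGraph k) □ pathGraph 2) Q ∧ Q.card = m} (3) := by
  haveI : NeZero n := ⟨by omega⟩
  haveI : NeZero k := ⟨by omega⟩
  have hc1 : (cycleGraph n).Connected := cycle_connected (by omega)
  have hc2 : (pathGraph k).Connected := by
    obtain ⟨k', rfl⟩ : ∃ k', k = k' + 1 := ⟨k - 1, by omega⟩
    exact pathGraph_connected k'
  have hc3 : (pathGraph 2).Connected := pathGraph_connected 1
  have hbox : ((cycleGraph n □ pathGraph k) □ pathGraph 2).Connected :=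
    (hc1.boxProd hc2).boxProd hc3
  have hdist : ∀ p q : (Fin n × Fin k) × Fin 2,
      ((cycleGraph n □ pathGraph k) □ pathGraph 2).dist p q =
        (cycleGraph n).dist p.1.1 q.1.1 + (pathGraph k).dist p.1.2 q.1.2
          + (pathGraph 2).dist p.2 q.2 := by
    intro p q
    rw [boxProd_dist (hc1.boxProd hc2) hc3, boxProd_dist hc1 hc2]
  obtain ⟨m, hm⟩ := ho
  have hm1 : 1 ≤ m := by omega
  constructor
  · -- membership : a resolving set of size 3
    set mm : Fin n := ⟨m, by omega⟩ with hmm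
    refine ⟨{((0,0),0), ((0,0),(1 : Fin 2)), ((mm,0),0)}, ?_, ?_⟩
    · intro x y hxy
      obtain ⟨⟨a,i⟩,s⟩ := x
      obtain ⟨⟨b,j⟩,t⟩ := y
      have h1 := hxy ((0,0),0) (by simp)
      have h2 := hxy ((0,0),(1 : Fin 2)) (by simp)
      have h3 := hxy ((mm,0),0) (by simp)
      rw [hdist, hdist] at h1 h2 h3
      simp only [cycle_dist_mk (show 2 ≤ n by omega), path_dist (show 0 < k by omega),
        path_dist (show 0 < 2 by omega), Fin.val_zero, Fin.val_one,
        Nat.sub_zero, Nat.zero_sub, Nat.add_zero] at h1 h2 h3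
      have hDa : a.val - m + (m - a.val) ≤ n - (a.val - m + (m - a.val)) := by
        have := a.is_lt; omega
      have hDb : b.val - m + (m - b.val) ≤ n - (b.val - m + (m - b.val)) := by
        have := b.is_lt; omega
      rw [min_eq_left hDa, min_eq_left hDb] at h3
      obtain ⟨hab, hij, hst⟩ := key n m a.val b.val i.val j.val s.val t.val hm
        a.is_lt b.is_lt s.is_lt t.is_lt h1 h2 h3
      simp only [Prod.mk.injEq]
      exact ⟨⟨Fin.ext hab, Fin.ext hij⟩, Fin.ext hst⟩
    · refine Finset.card_eq_three.mpr ⟨_, _, _, ?_, ?_, ?_, rfl⟩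
      · simp only [ne_eq, Prod.mk.injEq, not_and]
        intro _
        decide
      · simp only [ne_eq, Prod.mk.injEq, Fin.ext_iff]
        intro ⟨⟨h, _⟩, _⟩
        simp [hmm] at h
        omega
      · simp only [ne_eq, Prod.mk.injEq, Fin.ext_iff]
        intro ⟨⟨h, _⟩, _⟩
        simp at h
        omega
  · rintro M ⟨Q, hQ, rfl⟩
    by_contra hlt
    push_neg at hlt
    rcases Finset.eq_empty_or_nonempty Q with rfl | ⟨q, hq⟩
    · have := hQ ((0,0),(0 : Fin 2)) ((0,0),(1 : Fin 2)) (by simp)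
      exact absurd this (by simp [Prod.ext_iff])
    · obtain ⟨v, hv⟩ : ∃ v, Q.erase q ⊆ {v} := by
        rw [← Finset.card_le_one_iff_subset_singleton]
        have := Finset.card_erase_of_mem hq
        omega
      have hmem : ∀ r ∈ Q, r = q ∨ r = v := by
        intro r hr
        by_cases h : r = q
        · exact Or.inl h
        · exact Or.inr (Finset.mem_singleton.mp (hv (Finset.mem_erase.mpr ⟨h, hr⟩)))
      obtain ⟨⟨qa, qi⟩, qs⟩ := q
      have hone : ((1 : Fin n)).val = 1 := by
        rw [Fin.val_one']; exact Nat.mod_eq_of_lt (by omega)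
      set qi' : Fin k := if qi.val = 0 then ⟨1, by omega⟩ else ⟨qi.val - 1, by omega⟩ with hqi'
      set x1 : (Fin n × Fin k) × Fin 2 := ((qa + 1, qi), qs) with hx1
      set x2 : (Fin n × Fin k) × Fin 2 := ((qa - 1, qi), qs) with hx2
      set x3 : (Fin n × Fin k) × Fin 2 := ((qa, qi'), qs) with hx3
      set x4 : (Fin n × Fin k) × Fin 2 := ((qa, qi), qs + 1) with hx4
      have a1 : ((cycleGraph n □ pathGraph k) □ pathGraph 2).Adj x1 ((qa, qi), qs) := by
        rw [boxProd_adj]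
        exact Or.inl ⟨Or.inl ⟨(cycle_adj_succ (by omega) qa).symm, rfl⟩, rfl⟩
      have a2 : ((cycleGraph n □ pathGraph k) □ pathGraph 2).Adj x2 ((qa, qi), qs) := by
        rw [boxProd_adj]
        refine Or.inl ⟨Or.inl ⟨?_, rfl⟩, rfl⟩
        have := cycle_adj_succ (n := n) (by omega) (qa - 1)
        rwa [sub_add_cancel] at this
      have a3 : ((cycleGraph n □ pathGraph k) □ pathGraph 2).Adj x3 ((qa, qi), qs) := by
        rw [boxProd_adj]
        refine Or.inl ⟨Or.inr ⟨?_, rfl⟩, rfl⟩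
        rw [pathGraph_adj]
        simp only [hx3, hqi']
        split_ifs with h
        · simp; right; exact Fin.ext (by simpa using h)
        · simp; omega
      have a4 : ((cycleGraph n □ pathGraph k) □ pathGraph 2).Adj x4 ((qa, qi), qs) := by
        rw [boxProd_adj]
        refine Or.inr ⟨?_, rfl⟩
        rw [pathGraph_adj]
        exact (by decide : ∀ z : Fin 2, ((z + 1)).val + 1 = z.val ∨ z.val + 1 = ((z + 1)).val) qs
      have d1 := SimpleGraph.dist_eq_one_iff_adj.mpr a1
      have d2 := SimpleGraph.dist_eq_one_iff_adj.mpr a2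
      have d3 := SimpleGraph.dist_eq_one_iff_adj.mpr a3
      have d4 := SimpleGraph.dist_eq_one_iff_adj.mpr a4
      have tri : ∀ x : (Fin n × Fin k) × Fin 2,
          ((cycleGraph n □ pathGraph k) □ pathGraph 2).dist x ((qa, qi), qs) = 1 →
          (((cycleGraph n □ pathGraph k) □ pathGraph 2).dist x v ≤
            1 + ((cycleGraph n □ pathGraph k) □ pathGraph 2).dist ((qa, qi), qs) v ∧
          ((cycleGraph n □ pathGraph k) □ pathGraph 2).dist ((qa, qi), qs) v ≤
            1 + ((cycleGraph n □ pathGraph k) □ pathGraph 2).dist x v) := by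
        intro x hx
        constructor
        · have := hbox.dist_triangle (u := x) (v := ((qa, qi), qs)) (w := v)
          omega
        · have := hbox.dist_triangle (u := ((qa, qi), qs)) (v := x) (w := v)
          rw [SimpleGraph.dist_comm (u := ((qa, qi), qs)) (v := x)] at this
          omega
      obtain ⟨t1, t1'⟩ := tri x1 d1
      obtain ⟨t2, t2'⟩ := tri x2 d2
      obtain ⟨t3, t3'⟩ := tri x3 d3
      obtain ⟨t4, t4'⟩ := tri x4 d4
      have same : ∀ x y : (Fin n × Fin k) × Fin 2,
          ((cycleGraph n □ pathGraph k) □ pathGraph 2).dist x ((qa, qi), qs) = 1 →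
          ((cycleGraph n □ pathGraph k) □ pathGraph 2).dist y ((qa, qi), qs) = 1 →
          ((cycleGraph n □ pathGraph k) □ pathGraph 2).dist x v =
            ((cycleGraph n □ pathGraph k) □ pathGraph 2).dist y v → x = y := by
        intro x y hx hy hxy
        apply hQ
        intro r hr
        rcases hmem r hr with rfl | rfl
        · rw [hx, hy]
        · exact hxy
      have hne1 : qa + 1 ≠ qa := by
        intro h
        have h0 : (1 : Fin n) = 0 := by
          have := congrArg (· - qa) h
          simpa [sub_eq_iff_eq_add] using this
        have := congrArg Fin.val h0
        rw [hone] at this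
        simp at this
      have hne2 : qa - 1 ≠ qa := by
        intro h
        have h0 : (1 : Fin n) = 0 := by
          have := congrArg (qa - ·) h
          simpa [sub_sub_cancel] using this
        have := congrArg Fin.val h0
        rw [hone] at this
        simp at this
      have hne12 : qa + 1 ≠ qa - 1 := by
        intro h
        have h0 : (2 : Fin n) = 0 := by linear_combination h
        have := congrArg Fin.val h0
        have h2 : ((2 : Fin n)).val = 2 := by
          have : ((2 : Fin n)) = (1 : Fin n) + 1 := by norm_num
          rw [this, Fin.val_add, hone]
          exact Nat.mod_eq_of_lt (by omega)
        rw [h2] at this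
        simp at this
      have hne3 : qi' ≠ qi := by
        simp only [hqi']
        split_ifs with h <;> (intro hcon; rw [Fin.ext_iff] at hcon; simp at hcon; omega)
      have hne4 : qs + 1 ≠ qs := (by decide : ∀ z : Fin 2, z + 1 ≠ z) qs
      have hor : ∀ p1 p2 : (Fin n × Fin k) × Fin 2, p1 = p2 → p1.1.1 = p2.1.1 ∧ p1.1.2 = p2.1.2 ∧ p1.2 = p2.2 := by
        rintro p1 p2 rfl; exact ⟨rfl, rfl, rfl⟩
      have hcases : ((cycleGraph n □ pathGraph k) □ pathGraph 2).dist x1 v =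
            ((cycleGraph n □ pathGraph k) □ pathGraph 2).dist x2 v ∨
          ((cycleGraph n □ pathGraph k) □ pathGraph 2).dist x1 v =
            ((cycleGraph n □ pathGraph k) □ pathGraph 2).dist x3 v ∨
          ((cycleGraph n □ pathGraph k) □ pathGraph 2).dist x1 v =
            ((cycleGraph n □ pathGraph k) □ pathGraph 2).dist x4 v ∨
          ((cycleGraph n □ pathGraph k) □ pathGraph 2).dist x2 v =
            ((cycleGraph n □ pathGraph k) □ pathGraph 2).dist x3 v ∨
          ((cycleGraph n □ pathGraph k) □ pathGraph 2).dist x2 v =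
            ((cycleGraph n □ pathGraph k) □ pathGraph 2).dist x4 v ∨
          ((cycleGraph n □ pathGraph k) □ pathGraph 2).dist x3 v =
            ((cycleGraph n □ pathGraph k) □ pathGraph 2).dist x4 v := by omega
      rcases hcases with h | h | h | h | h | h
      · exact hne12 (hor _ _ (same x1 x2 d1 d2 h)).1
      · exact hne1 (hor _ _ (same x1 x3 d1 d3 h)).1
      · exact hne1 (hor _ _ (same x1 x4 d1 d4 h)).1
      · exact hne2 (hor _ _ (same x2 x3 d2 d3 h)).1
      · exact hne2 (hor _ _ (same x2 x4 d2 d4 h)).1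
      · exact hne4 (hor _ _ (same x3 x4 d3 d4 h)).2.2.symm
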